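/- arXiv:2502.11333 — 2 statements merged into one kernel-verified Lean document; each statement's English description precedes it below -/
import Mathlib

section
/- Let n ≥ 1, let c : EuclideanSpace ℝ (Fin n) → ℝ → EuclideanSpace ℝ (Fin n) be differentiable (jointly in its two arguments), and let v : ℝ → EuclideanSpace ℝ (Fin n) → EuclideanSpace ℝ (Fin n) be a time-dependent vector field. Suppose the consistency identity holds everywhere: for all x and t, (D_x c(x,t))(v t x) + ∂_t c(x,t) = 0, where D_x c(x,t) is the Fréchet derivative of c in its first argument and ∂_t c(x,t) the derivative in its second argument. Suppose further the boundary condition c(x, 0) = x holds for all x. Then for any differentiable curve x : ℝ → EuclideanSpace ℝ (Fin n) satisfying x'(t) = v t (x t) for all t ∈ [0,1], the map t ↦ c(x t, t) is constant on [0,1]; in particular c(x 1, 1) = x 0, i.e. the consistency function evaluated at the noisy endpoint equals the reverse-time ODE solution at time 0. -/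
/-!
Along a trajectory, the chain rule gives
`d/dt c(x t, t) = D_x c(x t, t) (v t (x t)) + ∂_t c(x t, t)`, which is zero by the consistency
identity. So `t ↦ c(x t, t)` is constant on `[0,1]`, and at `t = 1` the boundary condition
`c(x 0, 0) = x 0` finishes the argument.
-/

open Set

section PartialDerivatives

variable {𝕜 E F : Type*} [NontriviallyNormedField 𝕜] [NormedAddCommGroup E] [NormedSpace 𝕜 E]
  [NormedAddCommGroup F] [NormedSpace 𝕜 F] {c : E → 𝕜 → F} {L : E × 𝕜 →L[𝕜] F} {e : E} {t : 𝕜}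

theorem HasFDerivAt.hasFDerivAt_partial_fst
    (h : HasFDerivAt (fun q : E × 𝕜 => c q.1 q.2) L (e, t)) :
    HasFDerivAt (fun y => c y t) (L.comp (.inl 𝕜 E 𝕜)) e :=
  (h.comp e (hasFDerivAt_prodMk_left (𝕜 := 𝕜) e t) :)

theorem HasFDerivAt.hasDerivAt_partial_snd
    (h : HasFDerivAt (fun q : E × 𝕜 => c q.1 q.2) L (e, t)) :
    HasDerivAt (fun s => c e s) (L (0, 1)) t :=
  h.comp_hasDerivAt t ((hasDerivAt_const t e).prodMk (hasDerivAt_id t))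

theorem DifferentiableAt.hasDerivAt_uncurry_comp_curve {x : 𝕜 → E} {x' : E}
    (hc : DifferentiableAt 𝕜 (fun q : E × 𝕜 => c q.1 q.2) (x t, t)) (hx : HasDerivAt x x' t) :
    HasDerivAt (fun s => c (x s) s)
      (fderiv 𝕜 (fun y => c y t) (x t) x' + deriv (fun s => c (x t) s) t) t := by
  have hL := hc.hasFDerivAt
  rw [hL.hasFDerivAt_partial_fst.fderiv, hL.hasDerivAt_partial_snd.deriv]
  refine (hL.comp_hasDerivAt_of_eq t (hx.prodMk (hasDerivAt_id t)) rfl).congr_deriv ?_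
  rw [ContinuousLinearMap.comp_apply, ContinuousLinearMap.inl_apply, ← map_add, Prod.mk_add_mk,
    add_zero, zero_add]

end PartialDerivatives

theorem consistency_function_constant_along_trajectory_general
    (n : ℕ)
    (c : EuclideanSpace ℝ (Fin n) → ℝ → EuclideanSpace ℝ (Fin n))
    (v : ℝ → EuclideanSpace ℝ (Fin n) → EuclideanSpace ℝ (Fin n))
    (hc : Differentiable ℝ (fun q : EuclideanSpace ℝ (Fin n) × ℝ => c q.1 q.2))
    (hconsist : ∀ x t,
      (fderiv ℝ (fun y => c y t) x) (v t x) + deriv (fun s => c x s) t = 0)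
    (hbound : ∀ x, c x 0 = x)
    (x : ℝ → EuclideanSpace ℝ (Fin n))
    (hode : ∀ t ∈ Set.Icc (0:ℝ) 1, HasDerivAt x (v t (x t)) t) :
    (∀ t ∈ Set.Icc (0:ℝ) 1, c (x t) t = c (x 0) 0) ∧ c (x 1) 1 = x 0 := by
  have hderiv : ∀ t ∈ Icc (0:ℝ) 1, HasDerivAt (fun s => c (x s) s) 0 t := fun t ht => by
    simpa only [hconsist] using (hc _).hasDerivAt_uncurry_comp_curve (hode t ht)
  have hconst : ∀ t ∈ Icc (0:ℝ) 1, c (x t) t = c (x 0) 0 :=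
    constant_of_has_deriv_right_zero
      (fun t ht => (hderiv t ht).continuousAt.continuousWithinAt)
      (fun t ht => (hderiv t (Ico_subset_Icc_self ht)).hasDerivWithinAt)
  exact ⟨hconst, by rw [hconst 1 (right_mem_Icc.mpr zero_le_one), hbound]⟩

/-- Key intermediate claim in the proof of Lemma 2 of the paper: a consistency function
satisfying the infinitesimal consistency identity and the boundary condition `c x 0 = x`
is constant along any ODE trajectory of the vector field `v` on `[0,1]`, and in particular
maps the endpoint at time 1 to the time-0 state of the trajectory. -/
theorem consistency_function_constant_along_trajectory
    (n : ℕ) (hn : 1 ≤ n)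
    (c : EuclideanSpace ℝ (Fin n) → ℝ → EuclideanSpace ℝ (Fin n))
    (v : ℝ → EuclideanSpace ℝ (Fin n) → EuclideanSpace ℝ (Fin n))
    (hc : Differentiable ℝ (fun q : EuclideanSpace ℝ (Fin n) × ℝ => c q.1 q.2))
    (hconsist : ∀ x t,
      (fderiv ℝ (fun y => c y t) x) (v t x) + deriv (fun s => c x s) t = 0)
    (hbound : ∀ x, c x 0 = x)
    (x : ℝ → EuclideanSpace ℝ (Fin n))
    (hx : Differentiable ℝ x)
    (hode : ∀ t ∈ Set.Icc (0:ℝ) 1, HasDerivAt x (v t (x t)) t) :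
    (∀ t ∈ Set.Icc (0:ℝ) 1, c (x t) t = c (x 0) 0) ∧ c (x 1) 1 = x 0 :=
  consistency_function_constant_along_trajectory_general n c v hc hconsist hbound x hode
end

section
/- Let (Ω, F, P) be a probability space, X : Ω → ℝⁿ measurable, and U : Ω → ℝⁿ bounded measurable; let Ū := E[U | σ(X)] denote the conditional expectation of U given the σ-algebra generated by X. Let f : ℝⁿ → ℝᵐ be bounded measurable, let c : ℝⁿ → ℝᵐ be twice continuously differentiable with bounded first and second derivatives, and let d : ℝᵐ × ℝᵐ → ℝ be twice continuously differentiable with bounded first and second derivatives. Then, as Δ → 0⁺, E[d(f(X), c(X − Δ·Ū))] − E[d(f(X), c(X − Δ·U))] = o(Δ). -/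
open MeasureTheory Asymptotics
open scoped NNReal

/-!
Write `ψ_ω(y) = d(f(X ω), c(y))` and `L_ω = Dψ_ω(X ω)`, a σ(X)-measurable random linear form.
Since `ψ_ω` has a Lipschitz derivative, Taylor's formula gives
`ψ_ω(X - Δ•V) = ψ_ω(X) - Δ • L_ω(V) + O(Δ²)` uniformly for bounded `V`.
Taking `V = Ū` and `V = U`, the zeroth-order terms cancel, and so do the first-order ones after
integration, because `L` may be pulled out of the conditional expectation:
`E[L(Ū)] = E[E[L(U) | σ(X)]] = E[L(U)]`. The difference is therefore `O(Δ²) = o(Δ)`.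
-/

theorem exists_nnnorm_le_of_exists_norm_le {α E : Type*} [SeminormedAddGroup E] {φ : α → E}
    (h : ∃ C, ∀ x, ‖φ x‖ ≤ C) : ∃ C : ℝ≥0, ∀ x, ‖φ x‖₊ ≤ C := by
  obtain ⟨C, hC⟩ := h
  exact ⟨C.toNNReal, fun x => norm_toNNReal (a := φ x) ▸ Real.toNNReal_le_toNNReal (hC x)⟩

section LinearMaps

variable {𝕜 E F G H : Type*} [NontriviallyNormedField 𝕜] [NormedAddCommGroup E] [NormedSpace 𝕜 E]
  [NormedAddCommGroup F] [NormedSpace 𝕜 F] [NormedAddCommGroup G] [NormedSpace 𝕜 G]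
  [NormedAddCommGroup H] [NormedSpace 𝕜 H]

theorem LipschitzWith.clm_comp {α : Type*} [PseudoMetricSpace α]
    {u : α → G →L[𝕜] H} {v : α → F →L[𝕜] G} {Ku Kv Cu Cv : ℝ≥0}
    (hu : LipschitzWith Ku u) (hv : LipschitzWith Kv v)
    (hu_le : ∀ x, ‖u x‖₊ ≤ Cu) (hv_le : ∀ x, ‖v x‖₊ ≤ Cv) :
    LipschitzWith (Ku * Cv + Cu * Kv) fun x => (u x).comp (v x) := by
  refine LipschitzWith.of_dist_le_mul fun x y => ?_
  have hsplit : (u x).comp (v x) - (u y).comp (v y)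
      = (u x - u y).comp (v x) + (u y).comp (v x - v y) := by
    simp only [ContinuousLinearMap.sub_comp, ContinuousLinearMap.comp_sub]; abel
  rw [dist_eq_norm, hsplit]
  calc _ ≤ ‖u x - u y‖ * ‖v x‖ + ‖u y‖ * ‖v x - v y‖ :=
        (norm_add_le _ _).trans (add_le_add (ContinuousLinearMap.opNorm_comp_le _ _)
          (ContinuousLinearMap.opNorm_comp_le _ _))
    _ ≤ Ku * dist x y * Cv + Cu * (Kv * dist x y) := by
        rw [← dist_eq_norm, ← dist_eq_norm]
        gcongr
        exacts [hu.dist_le_mul x y, hv_le x, hu_le y, hv.dist_le_mul x y]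
    _ = _ := by push_cast; ring

theorem ContinuousLinearMap.nnnorm_zero_prod (L : E →L[𝕜] F) :
    ‖(0 : E →L[𝕜] G).prod L‖₊ = ‖L‖₊ := by
  rw [opNNNorm_prod, Prod.nnnorm_mk, nnnorm_zero, zero_max]

end LinearMaps

section Calculus

variable {E F G H : Type*} [NormedAddCommGroup E] [NormedSpace ℝ E]
  [NormedAddCommGroup F] [NormedSpace ℝ F] [NormedAddCommGroup G] [NormedSpace ℝ G]
  [NormedAddCommGroup H] [NormedSpace ℝ H]

theorem norm_sub_sub_le_of_hasFDerivAt_of_lipschitzWith {g : E → F} {g' : E → E →L[ℝ] F}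
    {K : ℝ≥0} (hg : ∀ x, HasFDerivAt g (g' x) x) (hg' : LipschitzWith K g') (x h : E) :
    ‖g (x + h) - g x - g' x h‖ ≤ K * ‖h‖ ^ 2 := by
  have hg'_near : ∀ y ∈ Metric.closedBall x ‖h‖, ‖g' y - g' x‖ ≤ K * ‖h‖ := fun y hy => by
    rw [← dist_eq_norm]
    exact (hg'.dist_le_mul y x).trans (by gcongr; exact hy)
  have := Convex.norm_image_sub_le_of_norm_hasFDerivWithin_le'
    (fun y _ => (hg y).hasFDerivWithinAt) hg'_near (convex_closedBall x ‖h‖)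
    (Metric.mem_closedBall_self (norm_nonneg h)) (by simp : x + h ∈ Metric.closedBall x ‖h‖)
  simpa [pow_two, mul_assoc] using this

theorem ContDiff.lipschitzWith_fderiv {f : E → F} {C : ℝ≥0} (hf : ContDiff ℝ 2 f)
    (h : ∀ x, ‖fderiv ℝ (fderiv ℝ f) x‖₊ ≤ C) : LipschitzWith C (fderiv ℝ f) :=
  lipschitzWith_of_nnnorm_fderiv_le ((hf.fderiv_right (m := 1) le_rfl).differentiable one_ne_zero) h

noncomputable def fderivCompProdMk (d : G × F → H) (c : E → F) (a : G) (y : E) : E →L[ℝ] H :=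
  (fderiv ℝ d (a, c y)).comp ((0 : E →L[ℝ] G).prod (fderiv ℝ c y))

variable {c : E → F} {d : G × F → H}

theorem hasFDerivAt_fderivCompProdMk (hd : Differentiable ℝ d) (hc : Differentiable ℝ c)
    (a : G) (y : E) : HasFDerivAt (fun y => d (a, c y)) (fderivCompProdMk d c a y) y :=
  (hd _).hasFDerivAt.comp y ((hasFDerivAt_const a y).prodMk (hc y).hasFDerivAt)

theorem norm_fderivCompProdMk_le {A C : ℝ≥0} (hc_le : ∀ y, ‖fderiv ℝ c y‖₊ ≤ A)
    (hd_le : ∀ z, ‖fderiv ℝ d z‖₊ ≤ C) (a : G) (y : E) :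
    ‖fderivCompProdMk d c a y‖ ≤ C * A := by
  refine (ContinuousLinearMap.opNorm_comp_le _ _).trans (mul_le_mul (hd_le _) ?_
    (norm_nonneg _) C.coe_nonneg)
  rw [← coe_nnnorm, ContinuousLinearMap.nnnorm_zero_prod]
  exact hc_le y

theorem lipschitzWith_fderivCompProdMk {A B C D : ℝ≥0}
    (hc : Differentiable ℝ c) (hc_le : ∀ y, ‖fderiv ℝ c y‖₊ ≤ A)
    (hc' : LipschitzWith B (fderiv ℝ c)) (hd_le : ∀ z, ‖fderiv ℝ d z‖₊ ≤ C)
    (hd' : LipschitzWith D (fderiv ℝ d)) (a : G) :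
    LipschitzWith (D * A * A + C * B) (fderivCompProdMk d c a) := by
  have hu : LipschitzWith (D * (1 * A)) fun y => fderiv ℝ d (a, c y) :=
    hd'.comp ((LipschitzWith.prodMk_left a).comp (lipschitzWith_of_nnnorm_fderiv_le hc hc_le))
  have hprod : LipschitzWith 1 fun p : (E →L[ℝ] G) × (E →L[ℝ] F) => p.1.prod p.2 :=
    (ContinuousLinearMap.prodₗᵢ ℝ).lipschitz
  have hv : LipschitzWith (1 * (1 * B)) fun y => (0 : E →L[ℝ] G).prod (fderiv ℝ c y) := by
    simpa only [Function.comp_def] using hprod.comp ((LipschitzWith.prodMk_left 0).comp hc')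
  have := hu.clm_comp hv (fun _ => hd_le _)
    (fun y => (ContinuousLinearMap.nnnorm_zero_prod _).trans_le (hc_le y))
  simp only [one_mul] at this
  exact this

theorem continuous_fderivCompProdMk (hc : ContDiff ℝ 1 c) (hd : ContDiff ℝ 1 d) :
    Continuous fun p : G × E => fderivCompProdMk d c p.1 p.2 := by
  have hprod : Continuous fun y => (0 : E →L[ℝ] G).prod (fderiv ℝ c y) :=
    (ContinuousLinearMap.prodₗᵢ ℝ).continuous.comp
      (continuous_const.prodMk (hc.continuous_fderiv one_ne_zero))
  exact ((hd.continuous_fderiv one_ne_zero).comp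
    (continuous_fst.prodMk (hc.continuous.comp continuous_snd))).clm_comp
    (hprod.comp continuous_snd)

end Calculus

section Expectation

variable {Ω E G : Type*} {m m0 : MeasurableSpace Ω} {μ : Measure Ω}
  [NormedAddCommGroup E] [NormedSpace ℝ E] [NormedAddCommGroup G] [NormedSpace ℝ G]

theorem integral_apply_condExp [CompleteSpace E] [CompleteSpace G] [IsFiniteMeasure μ]
    {L : Ω → E →L[ℝ] G} {U : Ω → E} (hm : m ≤ m0) (hL : StronglyMeasurable[m] L)
    (hL_bdd : ∃ B, ∀ᵐ ω ∂μ, ‖L ω‖ ≤ B) (hU : Integrable U μ) :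
    ∫ ω, L ω (μ[U|m] ω) ∂μ = ∫ ω, L ω (U ω) ∂μ := by
  obtain ⟨B, hB⟩ := hL_bdd
  have : IsFiniteMeasure (μ.trim hm) := isFiniteMeasure_trim hm
  rw [← integral_condExp hm (f := fun ω => L ω (U ω))]
  exact integral_congr_ae
    (condExp_stronglyMeasurable_bilin_of_bound (.id ℝ (E →L[ℝ] G)) hm hL hU B hB).symm

/-- `f` and `g` need not be integrable: if they are not, both integrals take the junk value `0`. -/
theorem norm_integral_sub_integral_le {f g : Ω → G} {C : ℝ}
    (hfg : Integrable (fun ω => f ω - g ω) μ) (hC : 0 ≤ C)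
    (h : ‖∫ ω, f ω - g ω ∂μ‖ ≤ C) : ‖∫ ω, f ω ∂μ - ∫ ω, g ω ∂μ‖ ≤ C := by
  by_cases hf : Integrable f μ
  · have hg : Integrable g μ :=
      (hf.sub hfg).congr (.of_forall fun ω => sub_sub_cancel (f ω) (g ω))
    rwa [← integral_sub hf hg]
  · have hg : ¬ Integrable g μ := fun hg =>
      hf ((hfg.add hg).congr (.of_forall fun ω => sub_add_cancel (f ω) (g ω)))
    simpa [integral_undef hf, integral_undef hg] using hC

def stepRemainder (ψ : Ω → E → G) (ψ' : Ω → E → E →L[ℝ] G) (X V : Ω → E) (Δ : ℝ) (ω : Ω) : G :=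
  ψ ω (X ω - Δ • V ω) - ψ ω (X ω) + Δ • ψ' ω (X ω) (V ω)

variable {ψ : Ω → E → G} {ψ' : Ω → E → E →L[ℝ] G} {K : ℝ≥0} {X V : Ω → E} {C : ℝ}

theorem norm_stepRemainder_le (hψ : ∀ ω y, HasFDerivAt (ψ ω) (ψ' ω y) y)
    (hψ' : ∀ ω, LipschitzWith K (ψ' ω)) (Δ : ℝ) (ω : Ω) :
    ‖stepRemainder ψ ψ' X V Δ ω‖ ≤ K * Δ ^ 2 * ‖V ω‖ ^ 2 := by
  have := norm_sub_sub_le_of_hasFDerivAt_of_lipschitzWith (hψ ω) (hψ' ω) (X ω) (-(Δ • V ω))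
  rw [norm_neg, norm_smul, mul_pow, Real.norm_eq_abs, sq_abs, ← mul_assoc] at this
  simpa [stepRemainder, sub_eq_add_neg] using this

theorem norm_integral_stepRemainder_le [IsProbabilityMeasure μ]
    (hψ : ∀ ω y, HasFDerivAt (ψ ω) (ψ' ω y) y) (hψ' : ∀ ω, LipschitzWith K (ψ' ω))
    (hVC : ∀ᵐ ω ∂μ, ‖V ω‖ ≤ C) (Δ : ℝ) :
    ‖∫ ω, stepRemainder ψ ψ' X V Δ ω ∂μ‖ ≤ K * Δ ^ 2 * C ^ 2 := by
  simpa using norm_integral_le_of_norm_le_const (μ := μ) <| hVC.mono fun ω hω =>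
    (norm_stepRemainder_le hψ hψ' Δ ω).trans (by gcongr)

variable [MeasurableSpace E] [BorelSpace E] [SecondCountableTopology E]

theorem integrable_stepRemainder [IsFiniteMeasure μ] (hψ : ∀ ω y, HasFDerivAt (ψ ω) (ψ' ω y) y)
    (hψ' : ∀ ω, LipschitzWith K (ψ' ω)) (hψ_meas : StronglyMeasurable (Function.uncurry ψ))
    (hL : StronglyMeasurable fun ω => ψ' ω (X ω)) (hX : Measurable X) (hV : Measurable V)
    (hVC : ∀ᵐ ω ∂μ, ‖V ω‖ ≤ C) (Δ : ℝ) :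
    Integrable (stepRemainder ψ ψ' X V Δ) μ := by
  refine .of_bound ?_ (K * Δ ^ 2 * C ^ 2) ?_
  · have hstep := hψ_meas.comp_measurable (measurable_id.prodMk (hX.sub (hV.const_smul Δ)))
    have hbase := hψ_meas.comp_measurable (measurable_id.prodMk hX)
    have hlin : StronglyMeasurable fun ω => ψ' ω (X ω) (V ω) :=
      isBoundedBilinearMap_apply.continuous.comp_stronglyMeasurable
        (hL.prodMk hV.stronglyMeasurable)
    exact ((hstep.sub hbase).add (hlin.const_smul Δ)).aestronglyMeasurable
  · filter_upwards [hVC] with ω hω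
    refine (norm_stepRemainder_le hψ hψ' Δ ω).trans ?_
    gcongr

theorem norm_integral_sub_smul_condExp_sub_le [IsProbabilityMeasure μ] [CompleteSpace E]
    [CompleteSpace G] (hm : m ≤ m0) (hψ : ∀ ω y, HasFDerivAt (ψ ω) (ψ' ω y) y)
    (hψ' : ∀ ω, LipschitzWith K (ψ' ω)) (hψ_meas : StronglyMeasurable (Function.uncurry ψ))
    (hL : StronglyMeasurable[m] fun ω => ψ' ω (X ω)) (hL_bdd : ∃ B, ∀ ω, ‖ψ' ω (X ω)‖ ≤ B)
    (hX : Measurable X) {U : Ω → E} (hU : Measurable U) (hUC : ∀ ω, ‖U ω‖ ≤ C) (Δ : ℝ) :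
    ‖∫ ω, ψ ω (X ω - Δ • μ[U|m] ω) ∂μ - ∫ ω, ψ ω (X ω - Δ • U ω) ∂μ‖
      ≤ 2 * K * Δ ^ 2 * C ^ 2 := by
  obtain ⟨B, hB⟩ := hL_bdd
  set Ū := μ[U|m]
  have hŪ : Measurable Ū := (stronglyMeasurable_condExp.mono hm).measurable
  have hŪC : ∀ᵐ ω ∂μ, ‖Ū ω‖ ≤ C := ae_bdd_norm_condExp_of_ae_bdd_norm (.of_forall hUC)
  have hU_int : Integrable U μ := .of_bound hU.aestronglyMeasurable C (.of_forall hUC)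
  have hRŪ := integrable_stepRemainder hψ hψ' hψ_meas (hL.mono hm) hX hŪ hŪC Δ
  have hRU := integrable_stepRemainder (μ := μ) hψ hψ' hψ_meas (hL.mono hm) hX hU (.of_forall hUC) Δ
  have hLV : ∀ V : Ω → E, Integrable V μ → Integrable (fun ω => ψ' ω (X ω) (V ω)) μ := fun V hV =>
    (ContinuousLinearMap.id ℝ (E →L[ℝ] G)).integrable_of_bilin_of_bdd_left (μ := μ) B
      (hL.mono hm).aestronglyMeasurable (.of_forall hB) hV
  have hsplit : (fun ω => ψ ω (X ω - Δ • Ū ω) - ψ ω (X ω - Δ • U ω)) = fun ω =>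
      stepRemainder ψ ψ' X Ū Δ ω - stepRemainder ψ ψ' X U Δ ω
        - Δ • (ψ' ω (X ω) (Ū ω) - ψ' ω (X ω) (U ω)) := by
    funext ω; simp only [stepRemainder, smul_sub]; abel
  have hLŪ := hLV Ū integrable_condExp
  have hLU := hLV U hU_int
  have hR : Integrable (fun ω => stepRemainder ψ ψ' X Ū Δ ω - stepRemainder ψ ψ' X U Δ ω) μ :=
    hRŪ.sub hRU
  have hLdiff : Integrable (fun ω => Δ • (ψ' ω (X ω) (Ū ω) - ψ' ω (X ω) (U ω))) μ :=
    (hLŪ.sub hLU).smul Δ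
  refine norm_integral_sub_integral_le (hsplit ▸ hR.sub hLdiff) (by positivity) ?_
  rw [hsplit, integral_sub hR hLdiff, integral_smul, integral_sub hLŪ hLU,
    integral_apply_condExp hm hL ⟨B, .of_forall hB⟩ hU_int, sub_self, smul_zero, sub_zero,
    integral_sub hRŪ hRU]
  calc _ ≤ _ := norm_sub_le _ _
    _ ≤ K * Δ ^ 2 * C ^ 2 + K * Δ ^ 2 * C ^ 2 := add_le_add
        (norm_integral_stepRemainder_le hψ hψ' hŪC Δ)
        (norm_integral_stepRemainder_le hψ hψ' (.of_forall hUC) Δ)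
    _ = _ := by ring

end Expectation

theorem consistency_distillation_eq_gct_up_to_littleO_general
    (n m : ℕ)
    {Ω : Type*} [MeasurableSpace Ω] (P : Measure Ω) [IsProbabilityMeasure P]
    (X U : Ω → EuclideanSpace ℝ (Fin n))
    (hX : Measurable X) (hU : Measurable U) (hUbd : ∃ C, ∀ ω, ‖U ω‖ ≤ C)
    (f : EuclideanSpace ℝ (Fin n) → EuclideanSpace ℝ (Fin m))
    (hf : Measurable f)
    (c : EuclideanSpace ℝ (Fin n) → EuclideanSpace ℝ (Fin m))
    (hc : ContDiff ℝ 2 c)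
    (hc1 : ∃ C, ∀ x, ‖fderiv ℝ c x‖ ≤ C)
    (hc2 : ∃ C, ∀ x, ‖fderiv ℝ (fderiv ℝ c) x‖ ≤ C)
    (d : EuclideanSpace ℝ (Fin m) × EuclideanSpace ℝ (Fin m) → ℝ)
    (hd : ContDiff ℝ 2 d)
    (hd1 : ∃ C, ∀ z, ‖fderiv ℝ d z‖ ≤ C)
    (hd2 : ∃ C, ∀ z, ‖fderiv ℝ (fderiv ℝ d) z‖ ≤ C) :
    (fun Δ : ℝ =>
        (∫ ω, d (f (X ω),
            c (X ω - Δ • (P[U | MeasurableSpace.comap X inferInstance]) ω)) ∂P)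
          - ∫ ω, d (f (X ω), c (X ω - Δ • U ω)) ∂P)
      =o[nhdsWithin (0:ℝ) (Set.Ioi 0)] fun Δ => Δ := by
  obtain ⟨A, hA⟩ := exists_nnnorm_le_of_exists_norm_le (φ := fderiv ℝ c) hc1
  obtain ⟨B, hB⟩ := exists_nnnorm_le_of_exists_norm_le (φ := fderiv ℝ (fderiv ℝ c)) hc2
  obtain ⟨C, hC⟩ := exists_nnnorm_le_of_exists_norm_le (φ := fderiv ℝ d) hd1
  obtain ⟨D, hD⟩ := exists_nnnorm_le_of_exists_norm_le (φ := fderiv ℝ (fderiv ℝ d)) hd2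
  obtain ⟨Cu, hCu⟩ := hUbd
  have hc_diff : Differentiable ℝ c := hc.differentiable two_ne_zero
  have hψ_meas : StronglyMeasurable (Function.uncurry fun ω y => d (f (X ω), c y)) :=
    (hd.continuous.measurable.comp ((hf.comp (hX.comp measurable_fst)).prodMk
      (hc.continuous.measurable.comp measurable_snd))).stronglyMeasurable
  have hL_meas : Measurable fun x => fderivCompProdMk d c (f x) x :=
    (continuous_fderivCompProdMk (hc.of_le one_le_two) (hd.of_le one_le_two)).measurable.comp
      (hf.prodMk measurable_id)
  have hbound := norm_integral_sub_smul_condExp_sub_le (μ := P) hX.comap_le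
    (fun ω => hasFDerivAt_fderivCompProdMk (hd.differentiable two_ne_zero) hc_diff (f (X ω)))
    (fun ω => lipschitzWith_fderivCompProdMk hc_diff hA (hc.lipschitzWith_fderiv hB) hC
      (hd.lipschitzWith_fderiv hD) (f (X ω)))
    hψ_meas (hL_meas.comp (comap_measurable X)).stronglyMeasurable
    ⟨C * A, fun ω => norm_fderivCompProdMk_le hA hC _ _⟩ hX hU hCu
  refine (IsBigO.of_bound (2 * (D * A * A + C * B : ℝ≥0) * Cu ^ 2) (.of_forall fun Δ => ?_))
    |>.trans_isLittleO ((isLittleO_pow_id one_lt_two).mono nhdsWithin_le_nhds)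
  rw [norm_pow, Real.norm_eq_abs Δ, sq_abs]
  exact (hbound Δ).trans_eq (by ring)

/-- Single-time-step core of Theorem 2 of the paper: the consistency distillation objective
(stepping by `Δ` times the conditionally averaged vector field `E[U | σ(X)]`) and the
generalized consistency training objective (stepping by `Δ` times the conditional vector
field `U`) differ by `o(Δ)` as `Δ → 0⁺`. -/
theorem consistency_distillation_eq_gct_up_to_littleO
    (n m : ℕ)
    {Ω : Type*} [MeasurableSpace Ω] (P : Measure Ω) [IsProbabilityMeasure P]
    (X U : Ω → EuclideanSpace ℝ (Fin n))
    (hX : Measurable X) (hU : Measurable U) (hUbd : ∃ C, ∀ ω, ‖U ω‖ ≤ C)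
    (f : EuclideanSpace ℝ (Fin n) → EuclideanSpace ℝ (Fin m))
    (hf : Measurable f) (hfbd : ∃ C, ∀ x, ‖f x‖ ≤ C)
    (c : EuclideanSpace ℝ (Fin n) → EuclideanSpace ℝ (Fin m))
    (hc : ContDiff ℝ 2 c)
    (hc1 : ∃ C, ∀ x, ‖fderiv ℝ c x‖ ≤ C)
    (hc2 : ∃ C, ∀ x, ‖fderiv ℝ (fderiv ℝ c) x‖ ≤ C)
    (d : EuclideanSpace ℝ (Fin m) × EuclideanSpace ℝ (Fin m) → ℝ)
    (hd : ContDiff ℝ 2 d)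
    (hd1 : ∃ C, ∀ z, ‖fderiv ℝ d z‖ ≤ C)
    (hd2 : ∃ C, ∀ z, ‖fderiv ℝ (fderiv ℝ d) z‖ ≤ C) :
    (fun Δ : ℝ =>
        (∫ ω, d (f (X ω),
            c (X ω - Δ • (P[U | MeasurableSpace.comap X inferInstance]) ω)) ∂P)
          - ∫ ω, d (f (X ω), c (X ω - Δ • U ω)) ∂P)
      =o[nhdsWithin (0:ℝ) (Set.Ioi 0)] fun Δ => Δ :=
  consistency_distillation_eq_gct_up_to_littleO_general n m P X U hX hU hUbd f hf c hc hc1 hc2 d hd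
    hd1 hd2
end
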